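/- The time evolution map T : 𝒫 → 𝒫 is a bijection. -/
import Mathlib


/-- Membership in the `U_q'(A₂⁽²⁾)` crystal `B_l = {(x,y) : x ≥ 0, y ≥ 0, x+y ≤ l}`
(for `l = 1` this is `B₁ = {1,2,3}`). -/
def memB (l : ℤ) (b : ℤ × ℤ) : Prop := 0 ≤ b.1 ∧ 0 ≤ b.2 ∧ b.1 + b.2 ≤ l

instance (l : ℤ) (b : ℤ × ℤ) : Decidable (memB l b) := by unfold memB; infer_instance

/-- The element `1 = (1,0)` of `B₁`. -/
def one : ℤ × ℤ := (1, 0)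
/-- The element `2 = (0,0)` of `B₁`. -/
def two : ℤ × ℤ := (0, 0)
/-- The element `3 = (0,1)` of `B₁`. -/
def three : ℤ × ℤ := (0, 1)

/-- The combinatorial `R` matrix `B_l ⊗ B₁ ≃ B₁ ⊗ B_l` of `U_q'(A₂⁽²⁾)`,
given by the explicit case list. -/
def Rmat (l : ℤ) (p : (ℤ × ℤ) × (ℤ × ℤ)) : (ℤ × ℤ) × (ℤ × ℤ) :=
  let x := p.1.1
  let y := p.1.2
  if p.2 = one then
    if p.1 = (l, 0) then (one, (l, 0))
    else if x + y = l ∧ 1 ≤ y then (three, (x + 1, y - 1))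
    else if x + y = l - 1 then (two, (x + 1, y))
    else (one, (x + 1, y + 1))
  else if p.2 = two then
    if p.1 = (l, 0) then (one, (l - 1, 0))
    else if x + y = l ∧ 1 ≤ y then (three, (x, y - 1))
    else (two, (x, y))
  else
    if p.1 = (0, l) then (three, (0, l))
    else if p.1 = (0, l - 1) then (two, (0, l))
    else if p.1 = (1, 0) then (one, (0, 1))
    else if y = 0 ∧ 2 ≤ x ∧ x ≤ l then (one, (x - 2, y))
    else if x = 0 ∧ 0 ≤ y ∧ y ≤ l - 2 then (one, (x, y + 2))
    else (three, (x - 1, y - 1))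

/-- Membership in `B_♮ = {(x,y) ∈ ℤ×ℤ : x ≤ 0, y ≥ 0, x+y ≤ 0}`. -/
def memBnat (b : ℤ × ℤ) : Prop := b.1 ≤ 0 ∧ 0 ≤ b.2 ∧ b.1 + b.2 ≤ 0

instance (b : ℤ × ℤ) : Decidable (memBnat b) := by unfold memBnat; infer_instance

/-- The map `R′ : B_♮ × B₁ → B₁ × B_♮`, the large-`l` limit of the
combinatorial `R` matrices. -/
def Rnat (p : (ℤ × ℤ) × (ℤ × ℤ)) : (ℤ × ℤ) × (ℤ × ℤ) :=
  let x := p.1.1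
  let y := p.1.2
  if p.2 = one then
    if p.1 = (0, 0) then (one, (0, 0))
    else if x + y = 0 ∧ 1 ≤ y then (three, (x + 1, y - 1))
    else if x + y = -1 then (two, (x + 1, y))
    else (one, (x + 1, y + 1))
  else if p.2 = two then
    if p.1 = (0, 0) then (one, (-1, 0))
    else if x + y = 0 ∧ 1 ≤ y then (three, (x, y - 1))
    else (two, (x, y))
  else
    if y = 0 then (one, (x - 2, y))
    else (three, (x - 1, y - 1))

/-- Auxiliary recursion for the carrier: `carrierAux p i n` is the carrier value `u_{i+n-1}`
after reading the letters `p_i, …, p_{i+n-1}`, starting from `u_♮ = (0,0)`. -/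
def carrierAux (p : ℤ → ℤ × ℤ) (i : ℤ) : ℕ → ℤ × ℤ
  | 0 => (0, 0)
  | n + 1 => (Rnat (carrierAux p i n, p (i + n))).2

/-- The carrier sequence `u_m` for a state `p` and a starting index `i`
(with `p_j = 1` for `j < i`): `u_m = u_♮` for `m < i` and
`(T(p)_m, u_m) = R′(u_{m−1}, p_m)` for `m ≥ i`. -/
def carrier (p : ℤ → ℤ × ℤ) (i m : ℤ) : ℤ × ℤ := carrierAux p i (m - i + 1).toNat

/-- The output `T(p)` of the time evolution computed with starting index `i`:
`T(p)_m = 1` for `m < i` and `(T(p)_m, u_m) = R′(u_{m−1}, p_m)` for `m ≥ i`. -/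
def Tout (p : ℤ → ℤ × ℤ) (i m : ℤ) : ℤ × ℤ :=
  if m < i then one else (Rnat (carrier p i (m - 1), p m)).1

/-- The set `𝒫` of states: maps `ℤ → B₁` with `p_j = 1` for all but finitely many `j`. -/
def PP : Set (ℤ → ℤ × ℤ) :=
  {p | (∀ j, memB 1 (p j)) ∧ {j | p j ≠ one}.Finite}

open Classical in
/-- The time evolution map `T : 𝒫 → 𝒫`, computed from any starting index `i` with
`p_j = 1` for all `j < i` (the result is independent of this choice). -/
noncomputable def Tmap (p : ℤ → ℤ × ℤ) : ℤ → ℤ × ℤ :=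
  if h : ∃ i : ℤ, ∀ j < i, p j = one then Tout p h.choose else p

lemma memB_one_cases {b : ℤ × ℤ} (h : memB 1 b) : b = one ∨ b = two ∨ b = three := by
  obtain ⟨x, y⟩ := b
  simp only [memB, one, two, three, Prod.mk.injEq] at *
  omega

lemma Rnat_mem {u b : ℤ × ℤ} (hu : memBnat u) (hb : memB 1 b) :
    memB 1 (Rnat (u, b)).1 ∧ memBnat (Rnat (u, b)).2 := by
  obtain ⟨x, y⟩ := u
  rcases memB_one_cases hb with rfl | rfl | rfl <;>
    · simp only [Rnat, one, two, three, memBnat, memB, Prod.mk.injEq] at *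
      split_ifs <;>
        simp only [memB, memBnat, one, two, three, Prod.mk.injEq, not_and, not_le,
          not_lt] at * <;> omega
/-- Explicit inverse of `Rnat`. -/
def Rinv (p : (ℤ × ℤ) × (ℤ × ℤ)) : (ℤ × ℤ) × (ℤ × ℤ) :=
  let x := p.2.1
  let y := p.2.2
  if p.1 = one then
    if p.2 = (0, 0) then ((0, 0), one)
    else if p.2 = (-1, 0) then ((0, 0), two)
    else if y = 0 then ((x + 2, 0), three)
    else ((x - 1, y - 1), one)
  else if p.1 = two then
    if x + y = 0 then ((x - 1, y), one)
    else (p.2, two)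
  else
    if x + y = 0 then ((x - 1, y + 1), one)
    else if x + y = -1 then ((x, y + 1), two)
    else ((x + 1, y + 1), three)

set_option maxHeartbeats 1000000 in
lemma Rinv_Rnat {u b : ℤ × ℤ} (hu : memBnat u) (hb : memB 1 b) :
    Rinv (Rnat (u, b)) = (u, b) := by
  obtain ⟨x, y⟩ := u
  simp only [memBnat] at hu
  rcases memB_one_cases hb with rfl | rfl | rfl <;>
    · simp only [Rnat]
      split_ifs
      all_goals simp only [Rinv]
      all_goals split_ifs
      all_goals
        simp only [one, two, three, Prod.mk.injEq, not_and, not_le, not_lt, and_true,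
          true_and, not_true, not_false_iff] at *
      all_goals omega

set_option maxHeartbeats 1000000 in
lemma Rnat_Rinv {b v : ℤ × ℤ} (hb : memB 1 b) (hv : memBnat v) :
    Rnat (Rinv (b, v)) = (b, v) := by
  obtain ⟨x, y⟩ := v
  simp only [memBnat] at hv
  rcases memB_one_cases hb with rfl | rfl | rfl <;>
    · simp only [Rinv]
      split_ifs
      all_goals simp only [Rnat]
      all_goals split_ifs
      all_goals
        simp only [one, two, three, Prod.mk.injEq, not_and, not_le, not_lt, and_true,
          true_and, not_true, not_false_iff] at *
      all_goals omega

set_option maxHeartbeats 1000000 in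
lemma Rinv_mem {b v : ℤ × ℤ} (hb : memB 1 b) (hv : memBnat v) :
    memBnat (Rinv (b, v)).1 ∧ memB 1 (Rinv (b, v)).2 := by
  obtain ⟨x, y⟩ := v
  simp only [memBnat] at hv
  rcases memB_one_cases hb with rfl | rfl | rfl <;>
    · simp only [Rinv]
      split_ifs
      all_goals
        simp only [one, two, three, memB, memBnat, Prod.mk.injEq, not_and, not_le,
          not_lt, and_true, true_and, not_true, not_false_iff] at *
      all_goals omega
lemma memBnat_zero : memBnat (0, 0) := by simp [memBnat]

lemma memB_one : memB 1 one := by simp [memB, one]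

lemma Rnat_zero_one : Rnat ((0, 0), one) = (one, (0, 0)) := by
  simp [Rnat, one, two, three]

lemma Rinv_one_zero : Rinv (one, (0, 0)) = ((0, 0), one) := by
  simp [Rinv, one, two, three]

lemma memBnat_fst_zero {c : ℤ × ℤ} (h : memBnat c) (h0 : c.1 = 0) : c = (0, 0) := by
  obtain ⟨x, y⟩ := c
  simp only [memBnat] at h
  simp only [Prod.mk.injEq] at *
  omega

lemma carrier_base {p : ℤ → ℤ × ℤ} {i m : ℤ} (h : m ≤ i - 1) : carrier p i m = (0, 0) := by
  have : (m - i + 1).toNat = 0 := by omega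
  simp [carrier, this, carrierAux]

lemma carrier_step {p : ℤ → ℤ × ℤ} {i m : ℤ} (h : i ≤ m) :
    carrier p i m = (Rnat (carrier p i (m - 1), p m)).2 := by
  have h1 : (m - i + 1).toNat = (m - 1 - i + 1).toNat + 1 := by omega
  have h2 : i + ((m - 1 - i + 1).toNat : ℤ) = m := by omega
  simp only [carrier, h1, carrierAux, h2]

lemma carrier_mem {p : ℤ → ℤ × ℤ} (hp : ∀ j, memB 1 (p j)) (i m : ℤ) :
    memBnat (carrier p i m) := by
  suffices h : ∀ n : ℕ, memBnat (carrierAux p i n) from h _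
  intro n
  induction n with
  | zero => exact memBnat_zero
  | succ n ih => exact (Rnat_mem ih (hp _)).2

lemma carrier_ones_zero {p : ℤ → ℤ × ℤ} {i i' : ℤ} (hi : i ≤ i')
    (h : ∀ j < i', p j = one) : ∀ m ≤ i' - 1, carrier p i m = (0, 0) := by
  have key : ∀ m, i - 1 ≤ m → m ≤ i' - 1 → carrier p i m = (0, 0) := by
    refine Int.le_induction (fun _ => carrier_base le_rfl) (fun n hn ih hn' => ?_) 
    rw [carrier_step (by omega), add_sub_cancel_right, ih (by omega),
      h (n + 1) (by omega), Rnat_zero_one]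
  intro m hm
  rcases le_or_gt m (i - 1) with h' | h'
  · exact carrier_base h'
  · exact key m (by omega) hm

lemma carrier_indep {p : ℤ → ℤ × ℤ} {i i' : ℤ} (hi : i ≤ i')
    (h : ∀ j < i', p j = one) : ∀ m, carrier p i m = carrier p i' m := by
  have key : ∀ m, i' - 1 ≤ m → carrier p i m = carrier p i' m := by
    refine Int.le_induction ?_ (fun n hn ih => ?_)
    · rw [carrier_base le_rfl, carrier_ones_zero hi h _ le_rfl]
    · rw [carrier_step (p := p) (i := i) (by omega), carrier_step (p := p) (i := i') (by omega),
        add_sub_cancel_right, ih]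
  intro m
  rcases le_or_gt (i' - 1) m with h' | h'
  · exact key m h'
  · rw [carrier_base (p := p) (i := i') (by omega), carrier_ones_zero hi h _ (by omega)]

lemma tout_indep {p : ℤ → ℤ × ℤ} {i i' : ℤ} (hi : i ≤ i')
    (h : ∀ j < i', p j = one) : Tout p i = Tout p i' := by
  funext m
  unfold Tout
  rcases lt_or_ge m i with hm | hm
  · rw [if_pos hm, if_pos (by omega)]
  · rw [if_neg (by omega)]
    rcases lt_or_ge m i' with hm' | hm'
    · rw [if_pos hm', carrier_ones_zero hi h _ (by omega), h m hm', Rnat_zero_one]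
    · rw [if_neg (by omega), carrier_indep hi h]

lemma ones_step {c : ℤ × ℤ} (hc : memBnat c) :
    (Rnat (c, one)).2 = (0, 0) ∨ (Rnat (c, one)).2.1 = c.1 + 1 := by
  obtain ⟨x, y⟩ := c
  simp only [memBnat] at hc
  simp only [Rnat]
  split_ifs with h1 h2 h3
  all_goals dsimp only
  all_goals
    simp only [one, two, three, Prod.mk.injEq, not_and, not_le, not_lt, and_true,
      true_and, not_true, not_false_iff, or_true, true_or] at *
  all_goals omega

lemma carrier_eventually_zero {p : ℤ → ℤ × ℤ} {N : ℤ} (hp : ∀ j, memB 1 (p j))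
    (hN : ∀ j, N ≤ j → p j = one) {i : ℤ} (hiN : i ≤ N) :
    ∃ M, N ≤ M ∧ ∀ m, M ≤ m → carrier p i m = (0, 0) := by
  have hum : memBnat (carrier p i (N - 1)) := carrier_mem hp i (N - 1)
  have key : ∀ m, N - 1 ≤ m →
      carrier p i m = (0, 0) ∨
        (carrier p i m).1 = (carrier p i (N - 1)).1 + (m - (N - 1)) := by
    refine Int.le_induction (Or.inr (by omega)) (fun n hn ih => ?_)
    have hstep : carrier p i (n + 1) = (Rnat (carrier p i n, p (n + 1))).2 := by
      rw [carrier_step (by omega), add_sub_cancel_right]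
    rcases ih with h0 | h1
    · left; rw [hstep, h0, hN (n + 1) (by omega), Rnat_zero_one]
    · have hone : p (n + 1) = one := hN (n + 1) (by omega)
      rcases ones_step (carrier_mem hp i n) with h2 | h2
      · left; rw [hstep, hone, h2]
      · right; rw [hstep, hone, h2, h1]; ring
  refine ⟨max N (N - (carrier p i (N - 1)).1), le_max_left _ _, fun m hm => ?_⟩
  rcases key m (by omega) with h0 | h1
  · exact h0
  · exfalso
    have := (carrier_mem hp i m).1
    simp only [memBnat] at hum
    omega
lemma PP_lower {p : ℤ → ℤ × ℤ} (hp : p ∈ PP) : ∃ i, ∀ j < i, p j = one := by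
  obtain ⟨b, hb⟩ := hp.2.bddBelow
  refine ⟨b, fun j hj => ?_⟩
  by_contra hne
  exact absurd (hb hne) (by omega)

lemma PP_upper {p : ℤ → ℤ × ℤ} (hp : p ∈ PP) : ∃ N, ∀ j, N ≤ j → p j = one := by
  obtain ⟨b, hb⟩ := hp.2.bddAbove
  refine ⟨b + 1, fun j hj => ?_⟩
  by_contra hne
  exact absurd (hb hne) (by omega)

lemma Tmap_eq {p : ℤ → ℤ × ℤ} {i : ℤ} (h : ∀ j < i, p j = one) : Tmap p = Tout p i := by
  have hex : ∃ i, ∀ j < i, p j = one := ⟨i, h⟩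
  unfold Tmap
  rw [dif_pos hex]
  have hc := hex.choose_spec
  rcases le_total hex.choose i with hle | hle
  · exact tout_indep hle h
  · exact (tout_indep hle hc).symm

lemma Tmap_mapsTo : Set.MapsTo Tmap PP PP := by
  intro p hp
  have hp1 := hp.1
  obtain ⟨i, hi⟩ := PP_lower hp
  obtain ⟨N0, hN0⟩ := PP_upper hp
  have hTm : Tmap p = Tout p i := Tmap_eq hi
  have hNone : ∀ j, max N0 i ≤ j → p j = one :=
    fun j hj => hN0 j (le_trans (le_max_left _ _) hj)
  obtain ⟨M, hMN, hM⟩ := carrier_eventually_zero hp1 hNone (le_max_right N0 i)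
  rw [hTm]
  constructor
  · intro m
    unfold Tout
    split_ifs
    · exact memB_one
    · exact (Rnat_mem (carrier_mem hp1 _ _) (hp1 m)).1
  · refine Set.Finite.subset (Set.finite_Icc i M) (fun m hm => ?_)
    simp only [Set.mem_setOf_eq] at hm
    simp only [Set.mem_Icc]
    by_contra hc
    apply hm
    unfold Tout
    rcases lt_or_ge m i with h | h
    · rw [if_pos h]
    · rw [if_neg (by omega)]
      have hMm : M < m := by
        by_contra hc2
        exact hc ⟨h, by omega⟩
      rw [hM (m - 1) (by omega), hNone m (by omega), Rnat_zero_one]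

lemma Tmap_injOn : Set.InjOn Tmap PP := by
  intro p1 hp1 p2 hp2 heq
  have hm1 := hp1.1
  have hm2 := hp2.1
  obtain ⟨i1, hi1⟩ := PP_lower hp1
  obtain ⟨i2, hi2⟩ := PP_lower hp2
  set i := min i1 i2 with hidef
  have hv1 : ∀ j < i, p1 j = one := fun j hj => hi1 j (lt_of_lt_of_le hj (min_le_left _ _))
  have hv2 : ∀ j < i, p2 j = one := fun j hj => hi2 j (lt_of_lt_of_le hj (min_le_right _ _))
  have hq : Tout p1 i = Tout p2 i := by rw [← Tmap_eq hv1, ← Tmap_eq hv2, heq]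
  obtain ⟨N1, hN1⟩ := PP_upper hp1
  obtain ⟨N2, hN2⟩ := PP_upper hp2
  set N := max (max N1 N2) i with hNdef
  have hNone1 : ∀ j, N ≤ j → p1 j = one := fun j hj => hN1 j (by omega)
  have hNone2 : ∀ j, N ≤ j → p2 j = one := fun j hj => hN2 j (by omega)
  obtain ⟨M1, hM1N, hM1⟩ := carrier_eventually_zero hm1 hNone1 (le_max_right _ _)
  obtain ⟨M2, hM2N, hM2⟩ := carrier_eventually_zero hm2 hNone2 (le_max_right _ _)
  set M := max M1 M2 with hMdef
  have key : ∀ n : ℕ, carrier p1 i (M - n) = carrier p2 i (M - n) := by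
    intro n
    induction n with
    | zero =>
      push_cast
      rw [sub_zero, hM1 M (le_max_left _ _), hM2 M (le_max_right _ _)]
    | succ n ih =>
      have hcast : M - ((n : ℤ) + 1) = M - n - 1 := by ring
      push_cast
      rw [hcast]
      rcases le_or_gt (M - (n : ℤ)) i with h | h
      · rw [carrier_base (by omega), carrier_base (by omega)]
      · have h1 : Rnat (carrier p1 i (M - n - 1), p1 (M - n)) =
            Rnat (carrier p2 i (M - n - 1), p2 (M - n)) := by
          have t1 : Tout p1 i (M - (n : ℤ)) = Tout p2 i (M - (n : ℤ)) := by rw [hq]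
          unfold Tout at t1
          rw [if_neg (by omega), if_neg (by omega)] at t1
          refine Prod.ext_iff.mpr ⟨t1, ?_⟩
          rw [← carrier_step (by omega), ← carrier_step (by omega)]
          exact ih
        have h2 := congrArg Rinv h1
        rw [Rinv_Rnat (carrier_mem hm1 _ _) (hm1 _),
          Rinv_Rnat (carrier_mem hm2 _ _) (hm2 _)] at h2
        exact congrArg Prod.fst h2
  have carrEq : ∀ m, carrier p1 i m = carrier p2 i m := by
    intro m
    rcases le_or_gt m M with h | h
    · have hkey := key (M - m).toNat
      rwa [show M - (((M - m).toNat : ℤ)) = m from by omega] at hkey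
    · rw [hM1 m (by omega), hM2 m (by omega)]
  funext m
  rcases lt_or_ge m i with h | h
  · rw [hv1 m h, hv2 m h]
  · have h1 : Rnat (carrier p1 i (m - 1), p1 m) = Rnat (carrier p2 i (m - 1), p2 m) := by
      have t1 : Tout p1 i m = Tout p2 i m := by rw [hq]
      unfold Tout at t1
      rw [if_neg (by omega), if_neg (by omega)] at t1
      refine Prod.ext_iff.mpr ⟨t1, ?_⟩
      rw [← carrier_step (by omega), ← carrier_step (by omega)]
      exact carrEq m
    have h2 := congrArg Rinv h1
    rw [Rinv_Rnat (carrier_mem hm1 _ _) (hm1 _),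
      Rinv_Rnat (carrier_mem hm2 _ _) (hm2 _)] at h2
    exact congrArg Prod.snd h2
/-- Backward carrier recursion for the inverse time evolution. -/
def backAux (q : ℤ → ℤ × ℤ) (N : ℤ) : ℕ → ℤ × ℤ
  | 0 => (0, 0)
  | n + 1 => (Rinv (q (N - n), backAux q N n)).1

/-- Backward carrier sequence: `vcar q N m` is the carrier value at position `m`
when running the inverse evolution leftwards from position `N`. -/
def vcar (q : ℤ → ℤ × ℤ) (N m : ℤ) : ℤ × ℤ := backAux q N (N - m).toNat

/-- The preimage state reconstructed from `q` by the inverse evolution. -/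
def pback (q : ℤ → ℤ × ℤ) (N m : ℤ) : ℤ × ℤ := (Rinv (q m, vcar q N m)).2

lemma vcar_ge {q : ℤ → ℤ × ℤ} {N m : ℤ} (h : N ≤ m) : vcar q N m = (0, 0) := by
  have : (N - m).toNat = 0 := by omega
  simp [vcar, this, backAux]

lemma vcar_rec {q : ℤ → ℤ × ℤ} {N : ℤ} (hqN : ∀ j, N ≤ j → q j = one) (m : ℤ) :
    vcar q N (m - 1) = (Rinv (q m, vcar q N m)).1 := by
  rcases le_or_gt m N with h | h
  · have h1 : (N - (m - 1)).toNat = (N - m).toNat + 1 := by omega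
    have h2 : N - ((N - m).toNat : ℤ) = m := by omega
    simp only [vcar, h1, backAux, h2]
  · rw [vcar_ge (by omega), vcar_ge (by omega), hqN m (by omega), Rinv_one_zero]

lemma vcar_mem {q : ℤ → ℤ × ℤ} (hq1 : ∀ j, memB 1 (q j)) (N m : ℤ) :
    memBnat (vcar q N m) := by
  suffices h : ∀ n : ℕ, memBnat (backAux q N n) from h _
  intro n
  induction n with
  | zero => exact memBnat_zero
  | succ n ih => exact (Rinv_mem (hq1 _) ih).1

lemma ones_back {v : ℤ × ℤ} (hv : memBnat v) :
    (Rinv (one, v)).1 = (0, 0) ∨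
      2 * (Rinv (one, v)).1.2 - (Rinv (one, v)).1.1 < 2 * v.2 - v.1 := by
  obtain ⟨x, y⟩ := v
  simp only [memBnat] at hv
  simp only [Rinv]
  split_ifs
  all_goals dsimp only
  all_goals
    simp only [one, two, three, Prod.mk.injEq, not_and, not_le, not_lt, and_true,
      true_and, not_true, not_false_iff, or_true, true_or] at *
  all_goals omega

lemma vcar_eventually_zero {q : ℤ → ℤ × ℤ} {N K : ℤ} (hq1 : ∀ j, memB 1 (q j))
    (hqN : ∀ j, N ≤ j → q j = one) (hK : ∀ j < K, q j = one) (hKN : K ≤ N) :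
    ∃ i, i ≤ K ∧ ∀ m < i, vcar q N m = (0, 0) := by
  have key : ∀ n : ℕ, vcar q N (K - 1 - n) = (0, 0) ∨
      2 * (vcar q N (K - 1 - n)).2 - (vcar q N (K - 1 - n)).1 + n ≤
        2 * (vcar q N (K - 1)).2 - (vcar q N (K - 1)).1 := by
    intro n
    induction n with
    | zero => right; push_cast; rw [sub_zero]; omega
    | succ n ih =>
      have hcast : K - 1 - ((n : ℤ) + 1) = (K - 1 - n) - 1 := by ring
      push_cast
      rw [hcast]
      have hrec := vcar_rec hqN (K - 1 - (n : ℤ))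
      rw [hK (K - 1 - (n : ℤ)) (by omega)] at hrec
      rcases ih with h0 | h1
      · left; rw [hrec, h0, Rinv_one_zero]
      · rcases ones_back (vcar_mem hq1 N (K - 1 - (n : ℤ))) with h2 | h2
        · left; rw [hrec, h2]
        · right; rw [hrec]; omega
  set c := 2 * (vcar q N (K - 1)).2 - (vcar q N (K - 1)).1 with hc
  refine ⟨K - 1 - c.toNat, by omega, fun m hm => ?_⟩
  have hkey := key (K - 1 - m).toNat
  rw [show K - 1 - (((K - 1 - m).toNat : ℤ)) = m from by omega] at hkey
  rcases hkey with h0 | h1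
  · exact h0
  · exfalso
    have hmem := vcar_mem hq1 N m
    simp only [memBnat] at hmem
    omega

lemma carrier_pback {q : ℤ → ℤ × ℤ} {N : ℤ} (hq1 : ∀ j, memB 1 (q j))
    (hqN : ∀ j, N ≤ j → q j = one) {i : ℤ} (hzero : ∀ m < i, vcar q N m = (0, 0)) :
    ∀ m, i - 1 ≤ m → carrier (pback q N) i m = vcar q N m := by
  refine Int.le_induction ?_ (fun n hn ih => ?_)
  · rw [carrier_base le_rfl, hzero (i - 1) (by omega)]
  · rw [carrier_step (by omega), add_sub_cancel_right, ih]
    have hrec := vcar_rec hqN (n + 1)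
    rw [add_sub_cancel_right] at hrec
    rw [hrec]
    show (Rnat ((Rinv (q (n + 1), vcar q N (n + 1))).1,
      (Rinv (q (n + 1), vcar q N (n + 1))).2)).2 = _
    rw [Prod.mk.eta, Rnat_Rinv (hq1 _) (vcar_mem hq1 _ _)]

lemma Tmap_surjOn : Set.SurjOn Tmap PP PP := by
  intro q hq
  have hq1 := hq.1
  obtain ⟨K, hK⟩ := PP_lower hq
  obtain ⟨N0, hN0⟩ := PP_upper hq
  set N := max N0 K with hNdef
  have hqN : ∀ j, N ≤ j → q j = one := fun j hj => hN0 j (by omega)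
  have hKN : K ≤ N := le_max_right _ _
  obtain ⟨i, hiK, hzero⟩ := vcar_eventually_zero hq1 hqN hK hKN
  set p := pback q N with hpdef
  have hpmem : ∀ j, memB 1 (p j) := fun j => (Rinv_mem (hq1 j) (vcar_mem hq1 N j)).2
  have hlow : ∀ j < i, p j = one := by
    intro j hj
    have : p j = (Rinv (q j, vcar q N j)).2 := rfl
    rw [this, hzero j hj, hK j (by omega), Rinv_one_zero]
  have hcar : ∀ m, i - 1 ≤ m → carrier p i m = vcar q N m :=
    carrier_pback hq1 hqN hzero
  have hTout : Tout p i = q := by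
    funext m
    unfold Tout
    rcases lt_or_ge m i with h | h
    · rw [if_pos h, hK m (by omega)]
    · rw [if_neg (by omega), hcar (m - 1) (by omega)]
      have hrec := vcar_rec hqN m
      rw [hrec]
      show (Rnat ((Rinv (q m, vcar q N m)).1, (Rinv (q m, vcar q N m)).2)).1 = _
      rw [Prod.mk.eta, Rnat_Rinv (hq1 _) (vcar_mem hq1 _ _)]
  have hppp : p ∈ PP := by
    constructor
    · exact hpmem
    · refine Set.Finite.subset (Set.finite_Icc i N) (fun m hm => ?_)
      simp only [Set.mem_setOf_eq] at hm
      simp only [Set.mem_Icc]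
      by_contra hc
      apply hm
      rcases lt_or_ge m i with h | h
      · exact hlow m h
      · have hNm : N < m := by
          by_contra hc2
          exact hc ⟨h, by omega⟩
        have : p m = (Rinv (q m, vcar q N m)).2 := rfl
        rw [this, vcar_ge (by omega), hqN m (by omega), Rinv_one_zero]
  exact ⟨p, hppp, by rw [Tmap_eq hlow, hTout]⟩

/-- The time evolution map `T : 𝒫 → 𝒫` is a bijection. -/
theorem T_bijective : Set.BijOn Tmap PP PP :=
  ⟨Tmap_mapsTo, Tmap_injOn, Tmap_surjOn⟩
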